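/- Two exponential maps e^z + c and e^z + c′ are conformally conjugate (by an affine map) if and only if c′ = c + 2kπi for some integer k. -/
import Mathlib


open Complex

/-- Two exponential maps `e^z + c` and `e^z + c'` are conformally conjugate by an
affine map iff `c' = c + 2kπi` for some integer `k`. -/
theorem exp_family_affine_conjugacy (c c' : ℂ) :
    (∃ a b : ℂ, a ≠ 0 ∧
        ∀ z : ℂ, a * (Complex.exp z + c) + b = Complex.exp (a * z + b) + c') ↔
      ∃ k : ℤ, c' = c + 2 * (k : ℂ) * Real.pi * I := by
  constructor
  · rintro ⟨a, b, ha, h⟩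
    -- derivative of both sides
    have hder : ∀ z : ℂ, a * Complex.exp z = Complex.exp (a * z + b) * a := by
      intro z
      have hfun : (fun z : ℂ => a * (Complex.exp z + c) + b)
          = (fun z : ℂ => Complex.exp (a * z + b) + c') := funext h
      have h1 : HasDerivAt (fun z : ℂ => a * (Complex.exp z + c) + b)
          (a * Complex.exp z) z := by
        simpa using (((Complex.hasDerivAt_exp z).add_const c).const_mul a).add_const b
      have hlin : HasDerivAt (fun z : ℂ => a * z + b) a z := by
        simpa using ((hasDerivAt_id z).const_mul a).add_const b
      have h2 : HasDerivAt (fun z : ℂ => Complex.exp (a * z + b) + c')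
          (Complex.exp (a * z + b) * a) z := hlin.cexp.add_const c'
      rw [hfun] at h1
      exact h1.unique h2
    have heq : ∀ z : ℂ, Complex.exp z = Complex.exp (a * z + b) := by
      intro z
      have := hder z
      rw [mul_comm (Complex.exp (a * z + b)) a] at this
      exact mul_left_cancel₀ ha this
    have hb : Complex.exp b = 1 := by
      have := heq 0
      simp at this
      exact this.symm
    have heq2 : ∀ z : ℂ, Complex.exp z = Complex.exp (a * z) := by
      intro z
      rw [heq z, Complex.exp_add, hb, mul_one]
    -- differentiate again to get a = 1
    have ha1 : a = 1 := by
      have hfun2 : (fun z : ℂ => Complex.exp z) = (fun z : ℂ => Complex.exp (a * z)) :=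
        funext heq2
      have h1 : HasDerivAt (fun z : ℂ => Complex.exp z) (Complex.exp 0) 0 :=
        Complex.hasDerivAt_exp 0
      have hlin : HasDerivAt (fun z : ℂ => a * z) a 0 := by
        simpa using (hasDerivAt_id (0 : ℂ)).const_mul a
      have h2 : HasDerivAt (fun z : ℂ => Complex.exp (a * z))
          (Complex.exp (a * 0) * a) 0 := hlin.cexp
      rw [hfun2] at h1
      have := h1.unique h2
      simp at this
      exact this.symm
    obtain ⟨n, hn⟩ := Complex.exp_eq_one_iff.mp hb
    refine ⟨n, ?_⟩
    have := h 0
    rw [ha1] at this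
    simp [hb, Complex.exp_add] at this
    rw [hn] at this
    linear_combination -this
  · rintro ⟨k, hk⟩
    refine ⟨1, 2 * (k : ℂ) * Real.pi * I, one_ne_zero, fun z => ?_⟩
    have hb : Complex.exp (2 * (k : ℂ) * Real.pi * I) = 1 := by
      have : (2 : ℂ) * (k : ℂ) * Real.pi * I = (k : ℂ) * (2 * Real.pi * I) := by ring
      rw [this, Complex.exp_int_mul_two_pi_mul_I]
    rw [one_mul, Complex.exp_add, hb, mul_one, hk]
    ring
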